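/- The functor sending a lower bounded distributive lattice D to the commutative (non-unital) ring M(D), with multiplication [U]·[V] = [U ∧ V], is left adjoint to the functor sending a non-unital commutative ring R to its lower bounded distributive lattice Idem(R) of idempotents (with p ∧ q = pq and p ∨ q = p + q − pq). Concretely: for every lower bounded distributive lattice D and non-unital commutative ring R, lattice homomorphisms D → Idem(R) preserving 0 correspond naturally bijectively to ring homomorphisms M(D) → R. -/

import Mathlib

/-- The subgroup of relators defining the module of motives of a lower bounded
distributive lattice `D`: generated by `[⊥]` and the modularity relators
`[U] + [V] - [U ⊔ V] - [U ⊓ V]`. -/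
def motiveRelators (D : Type*) [DistribLattice D] [OrderBot D] :
    AddSubgroup (FreeAbelianGroup D) :=
  AddSubgroup.closure
    ({FreeAbelianGroup.of (⊥ : D)} ∪
      {x | ∃ U V : D, x = FreeAbelianGroup.of U + FreeAbelianGroup.of V
          - FreeAbelianGroup.of (U ⊔ V) - FreeAbelianGroup.of (U ⊓ V)})

/-- The module of motives `M(D)` of a lower bounded distributive lattice `D`: the
free abelian group on `D` modulo `[⊥] = 0` and `[U] + [V] = [U ⊔ V] + [U ⊓ V]`. -/
def Motive (D : Type*) [DistribLattice D] [OrderBot D] : Type _ :=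
  FreeAbelianGroup D ⧸ motiveRelators D

noncomputable instance (D : Type*) [DistribLattice D] [OrderBot D] :
    AddCommGroup (Motive D) :=
  QuotientAddGroup.Quotient.addCommGroup (motiveRelators D)

/-- The universal valuation `D → M(D)`, `U ↦ [U]`. -/
def motiveOf {D : Type*} [DistribLattice D] [OrderBot D] (U : D) : Motive D :=
  QuotientAddGroup.mk (FreeAbelianGroup.of U)

/-- A valuation on a lower bounded distributive lattice with values in an abelian
group: `μ ⊥ = 0` and modularity `μ U + μ V = μ (U ⊔ V) + μ (U ⊓ V)`. -/
def IsValuation {D A : Type*} [DistribLattice D] [OrderBot D] [AddCommGroup A]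
    (μ : D → A) : Prop :=
  μ ⊥ = 0 ∧ ∀ U V : D, μ U + μ V = μ (U ⊔ V) + μ (U ⊓ V)

section Aux

variable {D : Type*} [DistribLattice D] [OrderBot D]

lemma motiveOf_bot : motiveOf (⊥ : D) = 0 := by
  rw [motiveOf]
  refine (QuotientAddGroup.eq_zero_iff _).mpr ?_
  exact AddSubgroup.subset_closure (Or.inl rfl)

lemma motiveOf_modular (U V : D) :
    motiveOf U + motiveOf V = motiveOf (U ⊔ V) + motiveOf (U ⊓ V) := by
  have h : ((FreeAbelianGroup.of U + FreeAbelianGroup.of V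
      - FreeAbelianGroup.of (U ⊔ V) - FreeAbelianGroup.of (U ⊓ V) : FreeAbelianGroup D))
      ∈ motiveRelators D :=
    AddSubgroup.subset_closure (Or.inr ⟨U, V, rfl⟩)
  have h3 : motiveOf U + motiveOf V - motiveOf (U ⊔ V) - motiveOf (U ⊓ V) = 0 :=
    (QuotientAddGroup.eq_zero_iff _).mpr h
  rwa [sub_sub, sub_eq_zero] at h3

lemma Motive.hom_ext {A : Type*} [AddCommGroup A] {φ ψ : Motive D →+ A}
    (h : ∀ U : D, φ (motiveOf U) = ψ (motiveOf U)) : φ = ψ := by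
  have : φ.comp (QuotientAddGroup.mk' (motiveRelators D))
      = ψ.comp (QuotientAddGroup.mk' (motiveRelators D)) :=
    FreeAbelianGroup.lift_ext _ _ h
  exact QuotientAddGroup.addMonoidHom_ext _ this

/-- Lift a valuation-like map to `Motive D`. -/
noncomputable def motiveLift {A : Type*} [AddCommGroup A] (f : D → A)
    (h0 : f ⊥ = 0) (hmod : ∀ U V : D, f U + f V = f (U ⊔ V) + f (U ⊓ V)) :
    Motive D →+ A := by
  refine QuotientAddGroup.lift (motiveRelators D) (FreeAbelianGroup.lift f)
    (fun x hx => ?_)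
  have hle : motiveRelators D ≤ (FreeAbelianGroup.lift f).ker := by
    rw [motiveRelators, AddSubgroup.closure_le]
    rintro x (rfl | ⟨U, V, rfl⟩) <;> simp only [SetLike.mem_coe, AddMonoidHom.mem_ker,
      map_sub, map_add, FreeAbelianGroup.lift_apply_of]
    · exact h0
    · rw [sub_sub, sub_eq_zero]
      exact hmod U V
  exact hle hx

lemma motiveLift_of {A : Type*} [AddCommGroup A] (f : D → A)
    (h0 : f ⊥ = 0) (hmod : ∀ U V : D, f U + f V = f (U ⊔ V) + f (U ⊓ V)) (U : D) :
    motiveLift f h0 hmod (motiveOf U) = f U := by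
  show QuotientAddGroup.lift _ _ _ (QuotientAddGroup.mk _) = _
  rw [QuotientAddGroup.lift_mk]
  exact FreeAbelianGroup.lift_apply_of f U

end Aux

/-- The adjunction `M ⊣ Idem` between lower bounded distributive lattices and
non-unital commutative rings, stated concretely: for a lower bounded distributive
lattice `D` and a non-unital commutative ring `R`, ring homomorphisms `M(D) → R`
(i.e. additive homomorphisms that are multiplicative with respect to the
multiplication `[U]·[V] = [U ⊓ V]` of `M(D)`) correspond naturally bijectively to
lattice homomorphisms `D → Idem(R)` preserving `0` (i.e. maps `f : D → R` landing in
idempotents with `f ⊥ = 0`, `f (U ⊓ V) = f U * f V` and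
`f (U ⊔ V) = f U + f V - f U * f V`), the bijection being given by composition with
the universal valuation `U ↦ [U]`. -/

theorem motive_idem_adjunction (D : Type*) [DistribLattice D] [OrderBot D]
    (R : Type*) [NonUnitalCommRing R] :
    ∃ e : {φ : Motive D →+ R //
            ∀ U V : D, φ (motiveOf (U ⊓ V)) = φ (motiveOf U) * φ (motiveOf V)} ≃
          {f : D → R // (∀ U, f U * f U = f U) ∧ f ⊥ = 0 ∧
            (∀ U V, f (U ⊓ V) = f U * f V) ∧
            ∀ U V, f (U ⊔ V) = f U + f V - f U * f V},
      ∀ φ (U : D), (e φ : D → R) U = (φ : Motive D →+ R) (motiveOf U) := by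
  classical
  refine ⟨{
    toFun := fun φ => ⟨fun U => (φ : Motive D →+ R) (motiveOf U), ?_, ?_, ?_, ?_⟩
    invFun := fun f => ⟨motiveLift (f : D → R) f.2.2.1
      (fun U V => by
        rw [f.2.2.2.2 U V, f.2.2.2.1 U V]
        abel), ?_⟩
    left_inv := ?_
    right_inv := ?_ }, fun φ U => rfl⟩
  · intro U
    show (φ : Motive D →+ R) (motiveOf U) * (φ : Motive D →+ R) (motiveOf U) = _
    rw [← φ.2 U U, inf_idem]
  · show (φ : Motive D →+ R) (motiveOf ⊥) = 0
    rw [motiveOf_bot, map_zero]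
  · exact φ.2
  · intro U V
    show (φ : Motive D →+ R) (motiveOf (U ⊔ V)) = _
    have h := congrArg (φ : Motive D →+ R) (motiveOf_modular U V)
    simp only [map_add] at h
    rw [← φ.2 U V]
    exact eq_sub_of_add_eq h.symm
  · intro U V
    simp only [motiveLift_of]
    exact f.2.2.2.1 U V
  · intro φ
    refine Subtype.ext (Motive.hom_ext fun U => ?_)
    simp [motiveLift_of]
  · intro f
    refine Subtype.ext (funext fun U => ?_)
    simp [motiveLift_of]
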